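/- Let L be an unsatisfiable linear system over F₂ whose incidence graph is an (r, Δ, c)-weak expander, let C be a Boolean function on the variables of L depending on at most cr/2 variables, and let Cl(C) denote the closure (in the incidence graph) of the set of variables C depends on. If (C = α) ∧ L^{Cl(C)} is satisfiable for some α ∈ {0,1}, then for every set I of at most r/2 equation indices, (C = α) ∧ L^I is satisfiable. Here L^S denotes the subsystem of L with equations indexed by S. -/

import Mathlib

open Finset

variable {m n : ℕ}

/-- The `i`-th equation of the linear system `Ax = b` over `F₂` holds at `x`. -/
def EqnHolds (A : Fin m → Fin n → ZMod 2) (b : Fin m → ZMod 2)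
    (i : Fin m) (x : Fin n → ZMod 2) : Prop :=
  ∑ j, A i j * x j = b i

/-- Boundary of a set `I` of rows in the incidence graph of `A`: variables occurring
in exactly one equation of `I`. -/
def rowBdry (A : Fin m → Fin n → ZMod 2) (I : Finset (Fin m)) : Finset (Fin n) :=
  Finset.univ.filter (fun j => (I.filter (fun i => A i j ≠ 0)).card = 1)

/-- The incidence graph of `Ax = b` is an `(r, Δ, c)`-weak expander. -/
def SysIsWeakExpander (A : Fin m → Fin n → ZMod 2) (r Δ : ℕ) (c : ℝ) : Prop :=
  (∀ i : Fin m, (Finset.univ.filter (fun j => A i j ≠ 0)).card ≤ Δ) ∧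
  (∀ I : Finset (Fin m), I.Nonempty → (I.card : ℝ) ≤ r / 2 → (rowBdry A I).Nonempty) ∧
  (∀ I : Finset (Fin m), (r : ℝ) / 2 < I.card → I.card ≤ r →
    c * I.card ≤ ((rowBdry A I).card : ℝ))

/-- `I` is `(r, V)`-contained in the incidence graph: `|I| ≤ r` and all unique
variables of `I` lie in `V`. -/
def RowContained (A : Fin m → Fin n → ZMod 2) (r : ℕ) (V : Finset (Fin n))
    (I : Finset (Fin m)) : Prop :=
  I.card ≤ r ∧ rowBdry A I ⊆ V

/-- `I` is a closure of the variable set `V`: a maximal-size `(r, V)`-contained row set. -/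
def RowClosure (A : Fin m → Fin n → ZMod 2) (r : ℕ) (V : Finset (Fin n))
    (I : Finset (Fin m)) : Prop :=
  RowContained A r V I ∧ ∀ I', RowContained A r V I' → I'.card ≤ I.card

lemma fredholm_zmod2 {ι κ : Type*} [Fintype ι] [Fintype κ] [DecidableEq ι] [DecidableEq κ]
    (M : Matrix ι κ (ZMod 2)) (d : ι → ZMod 2)
    (h : ¬ ∃ y, M.mulVec y = d) :
    ∃ u : ι → ZMod 2, (∀ j, ∑ i, u i * M i j = 0) ∧ ∑ i, u i * d i = 1 := by
  have hd : d ∉ LinearMap.range M.mulVecLin := by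
    rintro ⟨y, hy⟩; exact h ⟨y, hy⟩
  obtain ⟨g, hg1, hg2⟩ := Submodule.exists_dual_map_eq_bot_of_notMem hd inferInstance
  set u : ι → ZMod 2 := fun i => g (Pi.single i 1) with hu
  have key : ∀ v : ι → ZMod 2, g v = ∑ i, v i * u i := by
    intro v
    have hv : v = ∑ i, v i • Pi.single i (1 : ZMod 2) := by
      ext j; simp [Pi.single_apply]
    conv_lhs => rw [hv]
    simp [map_sum, smul_eq_mul, hu]
  refine ⟨u, ?_, ?_⟩
  · intro j
    have hbot := Submodule.eq_bot_iff _ |>.mp hg2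
    have h0 : g (M.mulVec (Pi.single j 1)) = 0 :=
      hbot _ (Submodule.mem_map_of_mem ⟨Pi.single j 1, rfl⟩)
    rw [key] at h0
    rw [← h0]
    refine Finset.sum_congr rfl fun i _ => ?_
    simp [Matrix.mulVec_single, mul_comm]
  · have hkd := key d
    have hne : g d ≠ 0 := hg1
    rw [hkd] at hne
    have h1 : ∑ i, d i * u i = 1 := by
      rcases (by decide : ∀ z : ZMod 2, z = 0 ∨ z = 1) (∑ i, d i * u i) with h' | h'
      · exact absurd h' hne
      · exact h'
    rw [← h1]
    exact Finset.sum_congr rfl fun i _ => mul_comm _ _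

lemma zmod2_ne_zero {z : ZMod 2} (h : z ≠ 0) : z = 1 := by
  revert h; revert z; decide

/-- Let `L = (Ax = b)` be an unsatisfiable `F₂` system whose incidence
graph is an `(r, Δ, c)`-weak expander, and `C` a Boolean function depending only on a
set `V` of at most `cr/2` variables. If `(C = α) ∧ L^{Cl(C)}` is satisfiable, then for
every set `I` of at most `r/2` equation indices, `(C = α) ∧ L^I` is satisfiable. -/
theorem sat_remains_sat
    (A : Fin m → Fin n → ZMod 2) (b : Fin m → ZMod 2)
    (r Δ : ℕ) (c : ℝ) (hc : 0 < c)
    (hexp : SysIsWeakExpander A r Δ c)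
    (hunsat : ¬ ∃ x : Fin n → ZMod 2, ∀ i : Fin m, EqnHolds A b i x)
    (C : (Fin n → ZMod 2) → Bool) (V : Finset (Fin n))
    (hdep : ∀ x y : Fin n → ZMod 2, (∀ j ∈ V, x j = y j) → C x = C y)
    (hwidth : (V.card : ℝ) ≤ c * r / 2)
    (Icl : Finset (Fin m)) (hIcl : RowClosure A r V Icl)
    (α : Bool)
    (hsat : ∃ x : Fin n → ZMod 2, C x = α ∧ ∀ i ∈ Icl, EqnHolds A b i x) :
    ∀ I : Finset (Fin m), (I.card : ℝ) ≤ r / 2 →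
      ∃ x : Fin n → ZMod 2, C x = α ∧ ∀ i ∈ I, EqnHolds A b i x := by
  intro I hIcard
  obtain ⟨x, hxC, hxIcl⟩ := hsat
  obtain ⟨⟨hIclr, hIclb⟩, hmax⟩ := hIcl
  -- |Icl| ≤ r/2
  have hIcl_half : (Icl.card : ℝ) ≤ (r : ℝ) / 2 := by
    by_contra hlt
    push_neg at hlt
    have h3 := hexp.2.2 Icl hlt hIclr
    have hle : ((rowBdry A Icl).card : ℝ) ≤ (V.card : ℝ) :=
      Nat.cast_le.mpr (Finset.card_le_card hIclb)
    nlinarith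
  set K : Finset (Fin m) := Icl ∪ I with hK
  have hKr : K.card ≤ r := by
    have h1 : (K.card : ℝ) ≤ (Icl.card : ℝ) + I.card := by
      exact_mod_cast Nat.cast_le.mpr (Finset.card_union_le Icl I)
    have : (K.card : ℝ) ≤ (r : ℝ) := by linarith
    exact_mod_cast this
  -- the extended system
  set M : Matrix (Fin m ⊕ Fin n) (Fin n) (ZMod 2) :=
    fun ρ j => Sum.elim (fun i => if i ∈ K then A i j else 0)
      (fun j' => if j' ∈ V ∧ j' = j then 1 else 0) ρ with hM
  set d : (Fin m ⊕ Fin n) → ZMod 2 :=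
    fun ρ => Sum.elim (fun i => if i ∈ K then b i else 0)
      (fun j => if j ∈ V then x j else 0) ρ with hd
  by_cases hsolv : ∃ y, M.mulVec y = d
  · obtain ⟨y, hy⟩ := hsolv
    refine ⟨y, ?_, ?_⟩
    · rw [← hxC]
      apply hdep
      intro j hj
      have := congrFun hy (Sum.inr j)
      simp only [hM, hd, Matrix.mulVec, dotProduct, Sum.elim_inr, hj, true_and,
        if_true] at this
      rw [← this]
      rw [Finset.sum_eq_single j (fun j' _ hne => by simp [Ne.symm hne])
        (fun h => absurd (Finset.mem_univ j) h)]
      simp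
    · intro i hi
      have hiK : i ∈ K := Finset.mem_union_right _ hi
      have := congrFun hy (Sum.inl i)
      simp only [hM, hd, Matrix.mulVec, dotProduct, Sum.elim_inl, hiK, if_true] at this
      exact this
  · obtain ⟨u, hu0, hu1⟩ := fredholm_zmod2 M d hsolv
    exfalso
    set J : Finset (Fin m) := K.filter (fun i => u (Sum.inl i) ≠ 0) with hJ
    -- column equations
    have colEq : ∀ j : Fin n,
        (∑ i ∈ J, A i j) = (if j ∈ V then u (Sum.inr j) else 0) := by
      intro j
      have h0 := hu0 j
      rw [Fintype.sum_sum_type] at h0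
      have e1 : ∑ i : Fin m, u (Sum.inl i) * M (Sum.inl i) j = ∑ i ∈ J, A i j := by
        rw [Finset.sum_congr rfl (g := fun i => if i ∈ J then A i j else 0) (fun i _ => ?_)]
        · rw [Finset.sum_ite_mem, Finset.univ_inter]
        · by_cases hiJ : i ∈ J
          · have hiK : i ∈ K := (Finset.mem_filter.mp hiJ).1
            have hune : u (Sum.inl i) ≠ 0 := (Finset.mem_filter.mp hiJ).2
            simp [hM, hiK, hiJ, zmod2_ne_zero hune]
          · by_cases hiK : i ∈ K
            · have : u (Sum.inl i) = 0 := by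
                by_contra hne
                exact hiJ (Finset.mem_filter.mpr ⟨hiK, hne⟩)
              simp [hM, this, hiJ]
            · simp [hM, hiK, hiJ]
      have e2 : ∑ j' : Fin n, u (Sum.inr j') * M (Sum.inr j') j
          = (if j ∈ V then u (Sum.inr j) else 0) := by
        rw [Finset.sum_eq_single j (fun j' _ hne => by simp [hM, hne])
          (fun h => absurd (Finset.mem_univ j) h)]
        by_cases hjV : j ∈ V <;> simp [hM, hjV]
      rw [e1, e2] at h0
      -- char 2 : a + b = 0 → a = b
      have : ∀ a b : ZMod 2, a + b = 0 → a = b := by decide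
      exact this _ _ h0
    -- boundary of J lies in V
    have hJb : rowBdry A J ⊆ V := by
      intro j hj
      have hfil : (J.filter fun i => A i j ≠ 0).card = 1 := by
        simpa [rowBdry] using hj
      obtain ⟨i0, hi0⟩ := Finset.card_eq_one.mp hfil
      have hsum1 : (∑ i ∈ J, A i j) = 1 := by
        rw [← Finset.sum_filter_ne_zero J (f := fun i => A i j), hi0, Finset.sum_singleton]
        have : i0 ∈ J.filter fun i => A i j ≠ 0 := hi0 ▸ Finset.mem_singleton_self i0
        exact zmod2_ne_zero (Finset.mem_filter.mp this).2
      by_contra hjV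
      rw [colEq j, if_neg hjV] at hsum1
      exact one_ne_zero hsum1.symm
    -- Icl ∪ J is (r, V)-contained
    have hcont : RowContained A r V (Icl ∪ J) := by
      constructor
      · refine le_trans (Finset.card_le_card ?_) hKr
        exact Finset.union_subset Finset.subset_union_left (Finset.filter_subset _ _)
      · intro j hj
        have hfil : ((Icl ∪ J).filter fun i => A i j ≠ 0).card = 1 := by
          simpa [rowBdry] using hj
        obtain ⟨i0, hi0⟩ := Finset.card_eq_one.mp hfil
        have hi0m : i0 ∈ (Icl ∪ J).filter fun i => A i j ≠ 0 :=
          hi0 ▸ Finset.mem_singleton_self i0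
        have hi0u := Finset.mem_filter.mp hi0m
        have hboth : ∀ S : Finset (Fin m), S ⊆ Icl ∪ J → i0 ∈ S →
            (S.filter fun i => A i j ≠ 0).card = 1 := by
          intro S hS hi0S
          have hsub : (S.filter fun i => A i j ≠ 0) ⊆ (Icl ∪ J).filter fun i => A i j ≠ 0 :=
            Finset.filter_subset_filter _ hS
          have hle : (S.filter fun i => A i j ≠ 0).card ≤ 1 :=
            hfil ▸ Finset.card_le_card hsub
          have hge : 1 ≤ (S.filter fun i => A i j ≠ 0).card := by
            refine Finset.card_pos.mpr ⟨i0, ?_⟩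
            exact Finset.mem_filter.mpr ⟨hi0S, hi0u.2⟩
          omega
        rcases Finset.mem_union.mp hi0u.1 with hIn | hIn
        · exact hIclb (by simpa [rowBdry] using hboth Icl Finset.subset_union_left hIn)
        · exact hJb (by simpa [rowBdry] using hboth J Finset.subset_union_right hIn)
    -- maximality forces J ⊆ Icl
    have hJIcl : J ⊆ Icl := by
      have hle := hmax _ hcont
      have heq := Finset.eq_of_subset_of_card_le Finset.subset_union_left hle
      intro i hi
      rw [heq]; exact Finset.mem_union_right _ hi
    -- compute the two halves of hu1
    rw [Fintype.sum_sum_type] at hu1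
    have f1 : ∑ i : Fin m, u (Sum.inl i) * d (Sum.inl i) = ∑ i ∈ J, b i := by
      rw [Finset.sum_congr rfl (g := fun i => if i ∈ J then b i else 0) (fun i _ => ?_)]
      · rw [Finset.sum_ite_mem, Finset.univ_inter]
      · by_cases hiJ : i ∈ J
        · have hiK : i ∈ K := (Finset.mem_filter.mp hiJ).1
          have hune : u (Sum.inl i) ≠ 0 := (Finset.mem_filter.mp hiJ).2
          simp [hd, hiK, hiJ, zmod2_ne_zero hune]
        · by_cases hiK : i ∈ K
          · have : u (Sum.inl i) = 0 := by
              by_contra hne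
              exact hiJ (Finset.mem_filter.mpr ⟨hiK, hne⟩)
            simp [hd, this, hiJ]
          · simp [hd, hiK, hiJ]
    have f2 : ∀ j : Fin n, u (Sum.inr j) * d (Sum.inr j)
        = (if j ∈ V then u (Sum.inr j) else 0) * x j := by
      intro j
      by_cases hjV : j ∈ V <;> simp [hd, hjV]
    have f3 : ∑ i ∈ J, b i = ∑ j : Fin n, (if j ∈ V then u (Sum.inr j) else 0) * x j := by
      have : ∀ i ∈ J, b i = ∑ j, A i j * x j := fun i hi => (hxIcl i (hJIcl hi)).symm
      rw [Finset.sum_congr rfl this, Finset.sum_comm]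
      refine Finset.sum_congr rfl fun j _ => ?_
      rw [← Finset.sum_mul, colEq j]
    rw [f1, Finset.sum_congr rfl (fun j _ => f2 j), f3] at hu1
    have : (1 : ZMod 2) = 0 := by
      rw [← hu1, CharTwo.add_self_eq_zero]
    exact one_ne_zero this
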